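/- Let G be a finite group acting transitively on a set P of odd size, and suppose a point stabilizer G_α contains at most one involution and G_α is contained in a direct product of two cyclic groups. Then every Sylow 2-subgroup of G is cyclic. -/
import Mathlib

/-- A finite commutative 2-group with at most one involution is cyclic. -/
lemma aux_cyclic {H : Type*} [CommGroup H] [Finite H]
    (h2 : ∀ x y : H, orderOf x = 2 → orderOf y = 2 → x = y)
    (hp : IsPGroup 2 H) : IsCyclic H := by
  haveI : Fact (Nat.Prime 2) := ⟨Nat.prime_two⟩
  have key : ∀ j : ℕ, Nat.card ((powMonoidHom (2 ^ j) : H →* H).ker) ≤ 2 ^ j := by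
    intro j
    induction j with
    | zero =>
      have hbot : (powMonoidHom (2 ^ 0) : H →* H).ker = ⊥ := by
        ext x; simp [powMonoidHom, MonoidHom.mem_ker]
      simp [hbot]
    | succ j ih =>
      set K := (powMonoidHom (2 ^ (j + 1)) : H →* H).ker with hK
      let φ : K →* H := (powMonoidHom 2).comp K.subtype
      have hker : Nat.card φ.ker ≤ 2 := by
        by_cases hex : ∃ a : φ.ker, a ≠ 1
        · obtain ⟨a, ha⟩ := hex
          have haH : ((a : K) : H) ^ 2 = 1 := a.2
          have haH1 : ((a : K) : H) ≠ 1 := by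
            intro h
            exact ha (Subtype.ext (Subtype.ext h))
          have haord : orderOf ((a : K) : H) = 2 := orderOf_eq_prime haH haH1
          have hle : φ.ker ≤ Subgroup.zpowers (a : K) := by
            intro b hb
            by_cases hb1 : b = 1
            · rw [hb1]; exact Subgroup.one_mem _
            · have hbH : (b : H) ^ 2 = 1 := by
                simpa [φ, powMonoidHom, MonoidHom.mem_ker] using hb
              have hbH1 : (b : H) ≠ 1 := fun h => hb1 (Subtype.ext h)
              have : (b : H) = ((a : K) : H) :=
                h2 _ _ (orderOf_eq_prime hbH hbH1) haord
              have hba : b = (a : K) := Subtype.ext this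
              rw [hba]
              exact Subgroup.mem_zpowers _
          calc Nat.card φ.ker ≤ Nat.card (Subgroup.zpowers (a : K)) :=
                Subgroup.card_le_of_le hle
            _ = orderOf (a : K) := Nat.card_zpowers _
            _ = 2 := by rw [← Subgroup.orderOf_coe]; exact haord
        · push_neg at hex
          have : φ.ker = ⊥ := by
            rw [Subgroup.eq_bot_iff_forall]
            intro x hx; exact Subtype.ext_iff.mp (hex ⟨x, hx⟩)
          simp [this]
      have hrange : φ.range ≤ (powMonoidHom (2 ^ j) : H →* H).ker := by
        rintro - ⟨x, rfl⟩
        have hx : (x : H) ^ 2 ^ (j + 1) = 1 := x.2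
        simp only [MonoidHom.mem_ker, powMonoidHom, MonoidHom.coe_mk, OneHom.coe_mk,
          MonoidHom.coe_comp, Function.comp_apply, Subgroup.coe_subtype, φ]
        rw [← pow_mul]
        rw [pow_succ] at hx
        rwa [mul_comm]
      calc Nat.card K
          = Nat.card (K ⧸ φ.ker) * Nat.card φ.ker :=
            Subgroup.card_eq_card_quotient_mul_card_subgroup _
        _ = Nat.card φ.range * Nat.card φ.ker := by
            rw [Nat.card_congr (QuotientGroup.quotientKerEquivRange φ).toEquiv]
        _ ≤ 2 ^ j * 2 :=
            Nat.mul_le_mul (le_trans (Subgroup.card_le_of_le hrange) ih) hker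
        _ = 2 ^ (j + 1) := by ring
  -- exponent is a power of 2
  obtain ⟨k, hk⟩ := IsPGroup.iff_card.mp hp
  haveI := Fintype.ofFinite H
  have hdvd : Monoid.exponent H ∣ Nat.card H := by
    rw [Nat.card_eq_fintype_card]; exact Group.exponent_dvd_card
  obtain ⟨e, _, he⟩ := (Nat.dvd_prime_pow Nat.prime_two).mp (hk ▸ hdvd)
  have htop : (⊤ : Subgroup H) ≤ (powMonoidHom (2 ^ e) : H →* H).ker := by
    intro x _
    simp only [MonoidHom.mem_ker, powMonoidHom, MonoidHom.coe_mk, OneHom.coe_mk]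
    rw [← he]
    exact Monoid.pow_exponent_eq_one x
  have hcard_le : Nat.card H ≤ 2 ^ e := by
    calc Nat.card H = Nat.card (⊤ : Subgroup H) := (Subgroup.card_top).symm
      _ ≤ Nat.card ((powMonoidHom (2 ^ e) : H →* H).ker) := Subgroup.card_le_of_le htop
      _ ≤ 2 ^ e := key e
  have hexp_le : Monoid.exponent H ≤ Nat.card H :=
    Nat.le_of_dvd Nat.card_pos hdvd
  exact IsCyclic.of_exponent_eq_card (le_antisymm hexp_le (he ▸ hcard_le))

/-- If `G` acts transitively on a set of odd size, and a point stabilizer contains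
at most one involution and embeds in a direct product of two cyclic groups,
then every Sylow 2-subgroup of `G` is cyclic. -/
theorem stmt5 {G : Type*} [Group G] [Fintype G] {P : Type*} [Fintype P]
    [MulAction G P] (htrans : MulAction.IsPretransitive G P)
    (hodd : Odd (Fintype.card P)) (α : P)
    (hinv : ∀ x y : MulAction.stabilizer G α, orderOf x = 2 → orderOf y = 2 → x = y)
    (hemb : ∃ (n m : ℕ) (f : MulAction.stabilizer G α →*
        Multiplicative (ZMod n) × Multiplicative (ZMod m)), Function.Injective f) :
    ∀ Q : Sylow 2 G, IsCyclic Q := by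
  classical
  haveI : Fact (Nat.Prime 2) := ⟨Nat.prime_two⟩
  obtain ⟨n, m, f, hf⟩ := hemb
  set stab := MulAction.stabilizer G α with hstab
  letI : CommGroup stab :=
    { (inferInstance : Group stab) with
      mul_comm := fun a b => hf (by rw [map_mul, map_mul, mul_comm]) }
  obtain ⟨S⟩ : Nonempty (Sylow 2 stab) := inferInstance
  -- S is cyclic
  have hS2 : ∀ x y : S, orderOf x = 2 → orderOf y = 2 → x = y := by
    intro x y hx hy
    refine Subtype.ext (hinv x.1 y.1 ?_ ?_)
    · rw [Subgroup.orderOf_coe]; exact hx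
    · rw [Subgroup.orderOf_coe]; exact hy
  haveI hScyc : IsCyclic S := aux_cyclic hS2 S.isPGroup'
  -- cardinality of S equals the 2-part of |G|
  have h1 : Fintype.card (MulAction.orbit G α) * Fintype.card stab = Fintype.card G :=
    MulAction.card_orbit_mul_card_stabilizer_eq_card_group G α
  have horbcard : Fintype.card (MulAction.orbit G α) = Fintype.card P := by
    rw [← Nat.card_eq_fintype_card, ← Nat.card_eq_fintype_card, MulAction.orbit_eq_univ]
    exact Nat.card_congr (Equiv.Set.univ P)
  have hG : Fintype.card G = Fintype.card P * Fintype.card stab := by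
    rw [← h1, horbcard]
  have hoddm := Nat.odd_iff.mp hodd
  have hPodd : ¬ (2 ∣ Fintype.card P) := Nat.two_dvd_ne_zero.mpr hoddm
  have hP0 : Fintype.card P ≠ 0 := by omega
  have hfact : (Nat.card G).factorization 2 = (Nat.card stab).factorization 2 := by
    rw [Nat.card_eq_fintype_card, Nat.card_eq_fintype_card, hG,
      Nat.factorization_mul hP0 Fintype.card_ne_zero]
    simp [Nat.factorization_eq_zero_of_not_dvd hPodd]
  have hcardS : Nat.card S = 2 ^ (Nat.card G).factorization 2 := by
    rw [S.card_eq_multiplicity, hfact]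
  -- image of S in G
  set T : Subgroup G := Subgroup.map stab.subtype S.toSubgroup with hT
  have hinj : Function.Injective stab.subtype := stab.subtype_injective
  haveI hTcyc : IsCyclic T :=
    isCyclic_of_surjective
      (S.toSubgroup.equivMapOfInjective stab.subtype hinj).toMonoidHom
      (S.toSubgroup.equivMapOfInjective stab.subtype hinj).surjective
  have hTcard : Nat.card T = Nat.card S :=
    (Nat.card_congr (S.toSubgroup.equivMapOfInjective stab.subtype hinj).toEquiv).symm
  have hT2 : IsPGroup 2 T := S.isPGroup'.map stab.subtype
  obtain ⟨Q', hQ'⟩ := hT2.exists_le_sylow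
  have hTQ' : T = Q'.toSubgroup := by
    refine Subgroup.eq_of_le_of_card_ge hQ' ?_
    rw [hTcard, hcardS, Q'.card_eq_multiplicity]
  haveI hQ'cyc : IsCyclic Q' := by
    rw [← hTQ']; exact hTcyc
  intro Q
  exact isCyclic_of_surjective (Sylow.equiv Q' Q).toMonoidHom (Sylow.equiv Q' Q).surjective
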